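/- Let X be the stationary first-order Gaussian autoregressive process defined by X_n = a·X_{n−1} + Z_n, where a ∈ (0,1) and the Z_n are i.i.d. zero-mean Gaussian with variance σ² > 0, so that X is a stationary zero-mean Gaussian Markov process with marginal variance σ²/(1−a²). Let Y_n = |X_n|. Then the output process Y is a Markov process. -/

import Mathlib

open MeasureTheory ProbabilityTheory Filter Real Set

noncomputable section

/-- Base-2 entropy of a measure (meaningful for measures with countable support). -/
def mEnt {γ : Type*} [MeasurableSpace γ] (ν : Measure γ) : ℝ :=
  ∑' y : γ, -((ν {y}).toReal * Real.logb 2 ((ν {y}).toReal))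

/-- Base-2 Shannon entropy of a random variable. -/
def rvEnt {Ω γ : Type*} [MeasurableSpace Ω] [MeasurableSpace γ]
    (μ : Measure Ω) (A : Ω → γ) : ℝ :=
  mEnt (μ.map A)

/-- Conditional (base-2) Shannon entropy of `A` given `B`. -/
def condEnt {Ω γ β : Type*} [MeasurableSpace Ω] [MeasurableSpace γ]
    [StandardBorelSpace γ] [Nonempty γ] [MeasurableSpace β]
    (μ : Measure Ω) [IsFiniteMeasure μ] (A : Ω → γ) (B : Ω → β) : ℝ :=
  ∫ b, mEnt (condDistrib A B μ b) ∂(μ.map B)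

/-- Dyadic quantization at resolution `2^{-k}`. -/
def qt (k : ℕ) (x : ℝ) : ℝ := ⌊(2 : ℝ) ^ k * x⌋ / 2 ^ k

/-- The block `(X_1, …, X_n)` of a process. -/
def blk {Ω α : Type*} (X : ℕ → Ω → α) (n : ℕ) (ω : Ω) : Fin n → α :=
  fun i => X (i + 1) ω

/-- The dyadically quantized block. -/
def qblk {Ω : Type*} (X : ℕ → Ω → ℝ) (n k : ℕ) (ω : Ω) : Fin n → ℝ :=
  fun i => qt k (X (i + 1) ω)

/-- Strict stationarity of a real-valued process. -/
def Stationary {Ω : Type*} [MeasurableSpace Ω] (μ : Measure Ω) (X : ℕ → Ω → ℝ) : Prop :=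
  ∀ n k : ℕ, μ.map (fun ω => fun i : Fin n => X (i + 1 + k) ω) = μ.map (blk X n)

/-- Base-2 differential entropy of a measure wrt the volume measure. -/
def dEnt {E : Type*} [MeasureSpace E] (ν : Measure E) : ℝ :=
  -∫ x, (ν.rnDeriv volume x).toReal * Real.logb 2 ((ν.rnDeriv volume x).toReal)

/-- The differential entropy of `ν` is finite (the integrand is integrable). -/
def HasFiniteDEnt {E : Type*} [MeasureSpace E] (ν : Measure E) : Prop :=
  Integrable (fun x => (ν.rnDeriv volume x).toReal * Real.logb 2 ((ν.rnDeriv volume x).toReal))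
    (volume : Measure E)

/-- A piecewise bijective function (Definition 1). -/
structure PBF where
  dom : Set ℝ
  part : ℕ → Set ℝ
  toFun : ℝ → ℝ
  deriv : ℝ → ℝ
  measurable_toFun : Measurable toFun
  pairwise_disjoint : Pairwise (Function.onFun Disjoint part)
  cover : (⋃ i, part i) = dom
  injOn : ∀ i, Set.InjOn toFun (part i)
  hasDeriv : ∀ i, ∀ x ∈ closure (part i), HasDerivWithinAt toFun (deriv x) (closure (part i)) x

/-- The (homogeneous, first-order) Markov property for a process indexed from 1. -/
def IsMarkov {Ω : Type*} [MeasurableSpace Ω] (μ : Measure Ω) (X : ℕ → Ω → ℝ) : Prop :=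
  ∀ n : ℕ, 1 ≤ n → ∀ s : Set ℝ, MeasurableSet s →
    (μ[(X (n + 1) ⁻¹' s).indicator (fun _ => (1 : ℝ)) |
        MeasurableSpace.comap (blk X n) inferInstance])
      =ᵐ[μ]
    (μ[(X (n + 1) ⁻¹' s).indicator (fun _ => (1 : ℝ)) |
        MeasurableSpace.comap (X n) inferInstance])

/-!
Given the whole past, `X (n+1) = a X n + Z (n+1)` with `Z (n+1)` independent of it, so the
conditional probability of `|X (n+1)| ∈ s` is `h (X n)` with `h x = ν {z | |a x + z| ∈ s}`, where
`ν` is the centred Gaussian law of `Z (n+1)`. Since `ν` is symmetric, `h` is even, so this is a function of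
`|X n|` alone; it is measurable with respect to both the past of `|X|` and `|X n|`, and the tower
property identifies both conditional expectations with it.
-/

section Freezing

variable {Ω β γ : Type*} [MeasurableSpace Ω] [MeasurableSpace β] [MeasurableSpace γ]
  {μ : Measure Ω} [IsFiniteMeasure μ]

lemma condDistrib_ae_eq_const_of_indepFun [StandardBorelSpace γ] [Nonempty γ]
    {W : Ω → β} {Z : Ω → γ} (hW : AEMeasurable W μ) (hZ : AEMeasurable Z μ)
    (hWZ : IndepFun W Z μ) :
    condDistrib Z W μ =ᵐ[μ.map W] Kernel.const β (μ.map Z) := by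
  refine condDistrib_ae_eq_of_measure_eq_compProd W hZ ?_
  rw [Measure.compProd_const, (indepFun_iff_map_prod_eq_prod_map_map hW hZ).mp hWZ]

lemma condExp_indicator_prod_ae_eq_of_indepFun [StandardBorelSpace γ] [Nonempty γ]
    {W : Ω → β} {Z : Ω → γ} (hW : Measurable W) (hZ : Measurable Z) (hWZ : IndepFun W Z μ)
    {S : Set (β × γ)} (hS : MeasurableSet S) :
    μ[((fun ω => (W ω, Z ω)) ⁻¹' S).indicator (fun _ => (1 : ℝ)) | MeasurableSpace.comap W ‹_›]
      =ᵐ[μ] fun ω => (μ.map Z).real (Prod.mk (W ω) ⁻¹' S) := by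
  have hind : Integrable (fun ω => S.indicator (fun _ => (1 : ℝ)) (W ω, Z ω)) μ :=
    (integrable_const (1 : ℝ)).indicator ((hW.prodMk hZ) hS)
  refine (condExp_prod_ae_eq_integral_condDistrib hW hZ.aemeasurable
    (stronglyMeasurable_const.indicator hS) hind).trans ?_
  filter_upwards [ae_of_ae_map hW.aemeasurable
    (condDistrib_ae_eq_const_of_indepFun hW.aemeasurable hZ.aemeasurable hWZ)] with ω hω
  rw [hω, Kernel.const_apply]
  exact (integral_indicator_one (measurable_prodMk_left hS) :)

end Freezing

lemma condExp_ae_eq_of_le_of_condExp_ae_eq {Ω : Type*} {m₁ m₂ m₀ : MeasurableSpace Ω}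
    {μ : Measure Ω} [IsFiniteMeasure μ] {f g : Ω → ℝ} (hm₁₂ : m₁ ≤ m₂) (hm₂ : m₂ ≤ m₀)
    (hf : μ[f | m₂] =ᵐ[μ] g) (hg : StronglyMeasurable[m₁] g) :
    μ[f | m₁] =ᵐ[μ] g :=
  calc μ[f | m₁] =ᵐ[μ] μ[μ[f | m₂] | m₁] := (condExp_condExp_of_le hm₁₂ hm₂).symm
    _ =ᵐ[μ] μ[g | m₁] := condExp_congr_ae hf
    _ = g := condExp_of_stronglyMeasurable (hm₁₂.trans hm₂) hg (integrable_condExp.congr hf)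

lemma measure_preimage_neg_add_eq {ν : Measure ℝ} (hν : ν.map (fun x => -x) = ν) {T : Set ℝ}
    (hT : MeasurableSet T) (hTneg : ∀ t, -t ∈ T ↔ t ∈ T) (c : ℝ) :
    ν ((fun z => -c + z) ⁻¹' T) = ν ((fun z => c + z) ⁻¹' T) := by
  have hset : (fun z => -c + z) ⁻¹' T = (fun z => -z) ⁻¹' ((fun z => c + z) ⁻¹' T) := by
    ext z
    rw [mem_preimage, mem_preimage, mem_preimage, ← hTneg, neg_add, neg_neg]
  rw [hset, ← Measure.map_apply measurable_neg (measurable_const_add c hT), hν]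

lemma blk_apply_last {Ω α : Type*} (X : ℕ → Ω → α) {n : ℕ} (hn : 1 ≤ n) (ω : Ω) :
    blk X n ω ⟨n - 1, by omega⟩ = X n ω := by
  simp only [blk]
  congr
  omega

section Blocks

variable {Ω α : Type*} [MeasurableSpace α]

lemma measurable_blk [MeasurableSpace Ω] {X : ℕ → Ω → α} (hX : ∀ k, Measurable (X k)) (n : ℕ) :
    Measurable (blk X n) :=
  measurable_pi_lambda _ fun _ => hX _

lemma measurable_comap_blk_last (X : ℕ → Ω → α) {n : ℕ} (hn : 1 ≤ n) :
    Measurable[MeasurableSpace.comap (blk X n) inferInstance] (X n) := by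
  have h : X n = (fun v : Fin n → α => v ⟨n - 1, by omega⟩) ∘ blk X n := by
    funext ω
    exact (blk_apply_last X hn ω).symm
  rw [h]
  exact (measurable_pi_apply _).comp (comap_measurable _)

lemma comap_blk_comp_le {β : Type*} [MeasurableSpace β] (X : ℕ → Ω → α) {g : α → β}
    (hg : Measurable g) (n : ℕ) :
    MeasurableSpace.comap (blk (fun k ω => g (X k ω)) n) inferInstance ≤
      MeasurableSpace.comap (blk X n) inferInstance := by
  have h : blk (fun k ω => g (X k ω)) n = (fun v i => g (v i)) ∘ blk X n := rfl
  rw [h]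
  exact ((measurable_pi_lambda _ fun i => hg.comp (measurable_pi_apply i)).comp
    (comap_measurable _)).comap_le

end Blocks

lemma condExp_indicator_comap_blk_ae_eq_of_ar1 {Ω : Type*} [MeasurableSpace Ω] {μ : Measure Ω}
    [IsFiniteMeasure μ] {X Z : ℕ → Ω → ℝ} {a : ℝ} {n : ℕ} (hn : 1 ≤ n)
    (hX : ∀ k, Measurable (X k)) (hZ : Measurable (Z (n + 1)))
    (hrec : ∀ ω, X (n + 1) ω = a * X n ω + Z (n + 1) ω)
    (hindep : IndepFun (Z (n + 1)) (blk X n) μ) {T : Set ℝ} (hT : MeasurableSet T) :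
    μ[(X (n + 1) ⁻¹' T).indicator (fun _ => (1 : ℝ)) |
        MeasurableSpace.comap (blk X n) inferInstance]
      =ᵐ[μ] fun ω => (μ.map (Z (n + 1))).real ((fun z => a * X n ω + z) ⁻¹' T) := by
  set S : Set ((Fin n → ℝ) × ℝ) := {p | a * p.1 ⟨n - 1, by omega⟩ + p.2 ∈ T}
  have hS : MeasurableSet S := by
    have : Measurable fun p : (Fin n → ℝ) × ℝ => a * p.1 ⟨n - 1, by omega⟩ + p.2 := by fun_prop
    exact this hT
  have hpre : X (n + 1) ⁻¹' T = (fun ω => (blk X n ω, Z (n + 1) ω)) ⁻¹' S := by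
    ext ω
    simp [S, blk_apply_last X hn, hrec]
  rw [hpre]
  filter_upwards [condExp_indicator_prod_ae_eq_of_indepFun
    (measurable_blk hX n) hZ hindep.symm hS] with ω hω
  rw [hω]
  simp only [S, preimage_ofPred_eq, blk_apply_last X hn]
  rfl

theorem ar1_abs_isMarkov_general
    {Ω : Type*} [MeasurableSpace Ω] (μ : Measure Ω) [IsProbabilityMeasure μ]
    (a : ℝ)
    (σ2 : NNReal)
    (X Z : ℕ → Ω → ℝ)
    (hXmeas : ∀ n, Measurable (X n)) (hZmeas : ∀ n, Measurable (Z n))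
    -- the AR(1) recursion
    (hrec : ∀ n ω, X (n + 1) ω = a * X n ω + Z (n + 1) ω)
    -- the innovations are i.i.d. zero-mean Gaussian with variance σ²
    (hZdist : ∀ n, μ.map (Z n) = gaussianReal 0 σ2)
    -- each innovation is independent of the past of the process
    (hZindep : ∀ n : ℕ, IndepFun (Z (n + 1)) (blk X n) μ) :
    IsMarkov μ (fun n ω => |X n ω|) := by
  intro n hn s hs
  have hν : (μ.map (Z (n + 1))).map (fun x => -x) = μ.map (Z (n + 1)) := by
    rw [hZdist, gaussianReal_map_neg, neg_zero]
  set ν := μ.map (Z (n + 1))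
  set T : Set ℝ := abs ⁻¹' s
  have hT : MeasurableSet T := measurable_abs hs
  set h : ℝ → ℝ := fun x => ν.real ((fun z => a * x + z) ⁻¹' T)
  have hh : Measurable h := by
    have : Measurable fun p : ℝ × ℝ => a * p.1 + p.2 := by fun_prop
    exact (measurable_measure_prodMk_left (this hT)).ennreal_toReal
  have h_neg (x : ℝ) : h (-x) = h x := by
    simp only [h, measureReal_def, mul_neg]
    rw [measure_preimage_neg_add_eq hν hT (fun t => by simp [T, abs_neg])]
  have h_abs (x : ℝ) : h |x| = h x := by
    rcases abs_choice x with hx | hx <;> rw [hx]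
    exact h_neg x
  have hB := measurable_blk hXmeas n
  have hpast : μ[(X (n + 1) ⁻¹' T).indicator (fun _ => (1 : ℝ)) |
      MeasurableSpace.comap (blk X n) inferInstance] =ᵐ[μ] fun ω => h |X n ω| :=
    (condExp_indicator_comap_blk_ae_eq_of_ar1 hn hXmeas (hZmeas _) (hrec n) (hZindep n) hT).trans
      (Eventually.of_forall fun ω => (h_abs _).symm)
  refine (condExp_ae_eq_of_le_of_condExp_ae_eq (comap_blk_comp_le X measurable_abs n)
    hB.comap_le hpast ?_).trans (condExp_ae_eq_of_le_of_condExp_ae_eq ?_ hB.comap_le hpast ?_).symm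
  · exact (hh.comp (measurable_comap_blk_last (fun k ω => |X k ω|) hn)).stronglyMeasurable
  · exact (measurable_abs.comp (measurable_comap_blk_last X hn)).comap_le
  · exact (hh.comp (comap_measurable _)).stronglyMeasurable

/-- The magnitude of a stationary Gaussian AR(1) process is Markov.
Let `X` be the stationary first-order Gaussian autoregressive process
`X_{n+1} = a·X_n + Z_{n+1}` with `a ∈ (0,1)` and `Z_n` i.i.d. zero-mean Gaussian
with variance `σ² > 0` (each innovation independent of the past), so that `X` is
a stationary zero-mean Gaussian Markov process with marginal variance
`σ²/(1−a²)`. Then the output process `Y_n = |X_n|` is a Markov process. -/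
theorem ar1_abs_isMarkov
    {Ω : Type*} [MeasurableSpace Ω] (μ : Measure Ω) [IsProbabilityMeasure μ]
    (a : ℝ) (ha : a ∈ Set.Ioo (0 : ℝ) 1)
    (σ2 : NNReal) (hσ2 : 0 < σ2)
    (X Z : ℕ → Ω → ℝ)
    (hXmeas : ∀ n, Measurable (X n)) (hZmeas : ∀ n, Measurable (Z n))
    -- the AR(1) recursion
    (hrec : ∀ n ω, X (n + 1) ω = a * X n ω + Z (n + 1) ω)
    -- the innovations are i.i.d. zero-mean Gaussian with variance σ²
    (hZdist : ∀ n, μ.map (Z n) = gaussianReal 0 σ2)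
    (hZiid : iIndepFun Z μ)
    -- each innovation is independent of the past of the process
    (hZindep : ∀ n : ℕ, IndepFun (Z (n + 1)) (blk X n) μ)
    -- X is stationary, zero-mean Gaussian and Markov with marginal variance σ²/(1−a²)
    (hstat : Stationary μ X) (hmarkov : IsMarkov μ X)
    (v : NNReal) (hv : (v : ℝ) = (σ2 : ℝ) / (1 - a ^ 2))
    (hmarg : μ.map (X 1) = gaussianReal 0 v) :
    IsMarkov μ (fun n ω => |X n ω|) :=
  ar1_abs_isMarkov_general μ a σ2 X Z hXmeas hZmeas hrec hZdist hZindep
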